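/- If (A,∘,B) is a quadratic Novikov algebra and e₁, e₂ ∈ A satisfy e₂∘e₂ = e₂ and e₂∘e₁ = p·e₁ + q·e₂ with p ≠ -2, then B(e₁, e₂) = 0. -/
import Mathlib


/-- In a quadratic Novikov algebra, if e₂∘e₂ = e₂ and
e₂∘e₁ = p•e₁ + q•e₂ with p ≠ -2, then B(e₁,e₂) = 0. -/
theorem quadratic_novikov_idempotent_orthogonality
    {k A : Type*} [Field k] [CharZero k] [AddCommGroup A] [Module k A]
    (mul : A →ₗ[k] A →ₗ[k] A) (B : LinearMap.BilinForm k A)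
    (hnov1 : ∀ a b c, mul (mul a b) c - mul a (mul b c) = mul (mul b a) c - mul b (mul a c))
    (hnov2 : ∀ a b c, mul (mul a b) c = mul (mul a c) b)
    (hsym : ∀ a b, B a b = B b a)
    (hnd : ∀ a, (∀ b, B a b = 0) → a = 0)
    (hinv : ∀ a b c, B (mul a b) c = -(B b (mul a c + mul c a)))
    (e₁ e₂ : A) (p q : k)
    (hidem : mul e₂ e₂ = e₂)
    (h21 : mul e₂ e₁ = p • e₁ + q • e₂)
    (hp : p ≠ -2) :
    B e₁ e₂ = 0 := by
  have h22 : B e₂ e₂ = 0 := by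
    have := hinv e₂ e₂ e₂
    rw [hidem] at this
    simp only [map_add, LinearMap.add_apply] at this
    linear_combination (1/3 : k) * this
  have h := hinv e₂ e₁ e₂
  rw [h21, hidem] at h
  simp only [map_add, map_smul, LinearMap.add_apply, LinearMap.smul_apply,
    smul_eq_mul, h22] at h
  have hp2 : p + 2 ≠ 0 := fun h0 => hp (by linear_combination h0)
  have : (p + 2) * B e₁ e₂ = 0 := by linear_combination h
  exact (mul_eq_zero.mp this).resolve_left hp2
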